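/- Let C be a bicomplete skeletal poset and W a subcategory. A model structure on C with weak equivalences W exists if and only if W satisfies strong 2-of-3 and there exists a choice of centers for (C, W). -/

import Mathlib

/-!
We model a bicomplete skeletal poset as a complete lattice `α`, viewed as a category
with a (unique) morphism `a → b` iff `a ≤ b`.  Products are infima, coproducts are
suprema, pushouts of `a → b` along `a → c` are `c → b ⊔ c`, pullbacks of `x → y`
along `z → y` are `x ⊓ z → z`.  A class of morphisms is a relation `α → α → Prop`.
-/

variable {α : Type*} [CompleteLattice α]

/-- The morphism `a → b` lifts on the left of the morphism `x → y`: every commutative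
square (i.e. `a ≤ x` and `b ≤ y`) admits a diagonal lift `b → x` (i.e. `b ≤ x`). -/
def Lifts (a b x y : α) : Prop := a ≤ x → b ≤ y → b ≤ x

/-- Strong 2-of-3: whenever a composite `a → b → c` lies in `W`, so do both factors. -/
def S2OF3 (W : α → α → Prop) : Prop :=
  ∀ a b c : α, a ≤ b → b ≤ c → W a c → W a b ∧ W b c

/-- A choice of centers: a functor (monotone map) `χ` sending every morphism of `W`
to an identity, such that the square `a ⊓ χ a → χ a`, `a ⊓ χ a → a`, `a → a ⊔ χ a`,
`χ a → a ⊔ χ a` lies in `W` for every object `a`. -/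
def IsCenters (W : α → α → Prop) (χ : α → α) : Prop :=
  Monotone χ ∧ (∀ a b : α, W a b → χ a = χ b) ∧
    ∀ a : α, W (a ⊓ χ a) (χ a) ∧ W (a ⊓ χ a) a ∧ W a (a ⊔ χ a) ∧ W (χ a) (a ⊔ χ a)

/-- `J_χ`: morphisms `a → b` of `W` such that the morphism `b → χ b` exists. -/
def Jc (W : α → α → Prop) (χ : α → α) (a b : α) : Prop := W a b ∧ b ≤ χ b

/-- `Q_χ`: morphisms `a → b` of `W` such that the morphism `χ a → a` exists. -/
def Qc (W : α → α → Prop) (χ : α → α) (a b : α) : Prop := W a b ∧ χ a ≤ a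

/-- A model structure on the poset `α`: three classes of morphisms (weak equivalences,
cofibrations, fibrations), each a class of genuine morphisms (`≤`), with identities
among the weak equivalences, 2-of-3, and the two weak factorization systems
(cofibrations, acyclic fibrations) and (acyclic cofibrations, fibrations):
mutual lifting, maximality of both classes with respect to lifting, and factorizations. -/
structure ModelStr (α : Type*) [CompleteLattice α] where
  We : α → α → Prop
  Cof : α → α → Prop
  Fib : α → α → Prop
  we_le : ∀ a b : α, We a b → a ≤ b
  cof_le : ∀ a b : α, Cof a b → a ≤ b
  fib_le : ∀ a b : α, Fib a b → a ≤ b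
  we_refl : ∀ a : α, We a a
  two_of_three₁ : ∀ a b c : α, a ≤ b → b ≤ c → We a b → We b c → We a c
  two_of_three₂ : ∀ a b c : α, a ≤ b → b ≤ c → We a b → We a c → We b c
  two_of_three₃ : ∀ a b c : α, a ≤ b → b ≤ c → We b c → We a c → We a b
  lift₁ : ∀ a b x y : α, Cof a b → Fib x y → We x y → Lifts a b x y
  lift₂ : ∀ a b x y : α, Cof a b → We a b → Fib x y → Lifts a b x y
  max₁L : ∀ a b : α, a ≤ b → (∀ x y : α, Fib x y → We x y → Lifts a b x y) → Cof a b
  max₁R : ∀ x y : α, x ≤ y → (∀ a b : α, Cof a b → Lifts a b x y) → Fib x y ∧ We x y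
  max₂L : ∀ a b : α, a ≤ b → (∀ x y : α, Fib x y → Lifts a b x y) → Cof a b ∧ We a b
  max₂R : ∀ x y : α, x ≤ y → (∀ a b : α, Cof a b → We a b → Lifts a b x y) → Fib x y
  fact₁ : ∀ a b : α, a ≤ b → ∃ m : α, Cof a m ∧ Fib m b ∧ We m b
  fact₂ : ∀ a b : α, a ≤ b → ∃ m : α, Cof a m ∧ We a m ∧ Fib m b

/-!
Necessity: in a poset, pushouts and pullbacks are joins and meets, so factoring `a → c` as an
acyclic cofibration `a → n` followed by a fibration `n → c` and pushing out / pulling back along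
`b` splits any weak equivalence `a → b → c` into weak equivalences, giving strong 2-of-3. A
fibrant-cofibrant replacement `χ` is a choice of centers: two fibrant-cofibrant objects under a
common weak equivalence coincide, and the four squares come from the replacement maps.

Sufficiency: put `Cof a b :↔ b ≤ a ⊔ (b ⊓ χ b)` and `Fib x y :↔ y ⊓ χ x ≤ x`. Both
factorizations of `a → b` go through `a ⊔ (b ⊓ c)` (with `c = χ b`, resp. `c = χ a`), lifting
reduces to `χ b ≤ χ x`, and in a poset the retract argument turns factorization plus lifting into the
maximality axioms.
-/

namespace ModelStr

section Necessity

variable (M : ModelStr α) {a b c n u v w : α}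

theorem cof_we_sup (hcof : M.Cof a n) (hwe : M.We a n) (hab : a ≤ b) :
    M.Cof b (b ⊔ n) ∧ M.We b (b ⊔ n) :=
  M.max₂L _ _ le_sup_left fun _ _ hf hbx hsy =>
    sup_le hbx (M.lift₂ _ _ _ _ hcof hwe hf (hab.trans hbx) (le_sup_right.trans hsy))

theorem fib_we_inf (hfib : M.Fib n c) (hwe : M.We n c) (hbc : b ≤ c) :
    M.Fib (b ⊓ n) b ∧ M.We (b ⊓ n) b :=
  M.max₁R _ _ inf_le_left fun _ _ hc hs ht =>
    le_inf ht (M.lift₁ _ _ _ _ hc hfib hwe (hs.trans inf_le_right) (ht.trans hbc))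

theorem we_s2of3 : S2OF3 M.We := by
  intro a b c hab hbc hac
  obtain ⟨n, hcof, han, hfib⟩ := M.fact₂ a c (hab.trans hbc)
  have hle_an : a ≤ n := M.we_le _ _ han
  have hle_nc : n ≤ c := M.fib_le _ _ hfib
  have hnc : M.We n c := M.two_of_three₂ a n c hle_an hle_nc han hac
  constructor
  · have hbn_n : M.We (b ⊓ n) n := by
      simpa only [sup_eq_right.2 (inf_le_right : b ⊓ n ≤ n)] using
        (M.cof_we_sup hcof han (le_inf hab hle_an)).2
    have hab_n : M.We a (b ⊓ n) :=
      M.two_of_three₃ _ _ _ (le_inf hab hle_an) inf_le_right hbn_n han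
    exact M.two_of_three₁ _ _ _ (le_inf hab hle_an) inf_le_left hab_n
      (M.fib_we_inf hfib hnc hbc).2
  · have hn_bn : M.We n (b ⊔ n) := by
      simpa only [inf_eq_right.2 (le_sup_right : n ≤ b ⊔ n)] using
        (M.fib_we_inf hfib hnc (sup_le hbc hle_nc)).2
    have hbn_c : M.We (b ⊔ n) c :=
      M.two_of_three₂ _ _ _ le_sup_right (sup_le hbc hle_nc) hn_bn hnc
    exact M.two_of_three₁ _ _ _ le_sup_left (sup_le hbc hle_nc)
      (M.cof_we_sup hcof han hab).2 hbn_c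

theorem cof_trans (hab : M.Cof a b) (hbc : M.Cof b c) : M.Cof a c :=
  M.max₁L _ _ ((M.cof_le _ _ hab).trans (M.cof_le _ _ hbc)) fun _ _ hf hw hax hcy =>
    M.lift₁ _ _ _ _ hbc hf hw
      (M.lift₁ _ _ _ _ hab hf hw hax ((M.cof_le _ _ hbc).trans hcy)) hcy

theorem cof_of_we_of_cofibrant (hab : a ≤ b) (hwe : M.We a b) (hb : M.Cof ⊥ b) :
    M.Cof a b := by
  obtain ⟨p, hap, hwe_ap, hpb⟩ := M.fact₂ a b hab
  have hwe_pb : M.We p b :=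
    M.two_of_three₂ a p b (M.we_le _ _ hwe_ap) (M.fib_le _ _ hpb) hwe_ap hwe
  obtain rfl : p = b :=
    le_antisymm (M.fib_le _ _ hpb) (M.lift₁ _ _ _ _ hb hpb hwe_pb bot_le le_rfl)
  exact hap

theorem le_of_we_inf (hwe : M.We (u ⊓ v) v) (hv : M.Cof ⊥ v) (hu : M.Fib u ⊤) : v ≤ u :=
  M.lift₂ _ _ _ _ (M.cof_of_we_of_cofibrant inf_le_right hwe hv) hwe hu inf_le_left le_top

theorem eq_of_we_of_we (hwu : M.We w u) (hwv : M.We w v) (hu : M.Cof ⊥ u) (hu' : M.Fib u ⊤)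
    (hv : M.Cof ⊥ v) (hv' : M.Fib v ⊤) : u = v := by
  have hw : w ≤ u ⊓ v := le_inf (M.we_le _ _ hwu) (M.we_le _ _ hwv)
  have hu_inf : M.We (u ⊓ v) u := (M.we_s2of3 _ _ _ hw inf_le_left hwu).2
  have hv_inf : M.We (u ⊓ v) v := (M.we_s2of3 _ _ _ hw inf_le_right hwv).2
  exact le_antisymm (M.le_of_we_inf (inf_comm u v ▸ hu_inf) hu hv')
    (M.le_of_we_inf hv_inf hv hu')

noncomputable def cofibrantReplacement (a : α) : α :=
  (M.fact₁ ⊥ a bot_le).choose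

theorem cofibrantReplacement_spec (a : α) :
    M.Cof ⊥ (M.cofibrantReplacement a) ∧ M.Fib (M.cofibrantReplacement a) a ∧
      M.We (M.cofibrantReplacement a) a :=
  (M.fact₁ ⊥ a bot_le).choose_spec

theorem cofibrantReplacement_le (a : α) : M.cofibrantReplacement a ≤ a :=
  M.fib_le _ _ (M.cofibrantReplacement_spec a).2.1

theorem monotone_cofibrantReplacement : Monotone M.cofibrantReplacement := fun a b hab =>
  M.lift₁ _ _ _ _ (M.cofibrantReplacement_spec a).1 (M.cofibrantReplacement_spec b).2.1
    (M.cofibrantReplacement_spec b).2.2 bot_le ((M.cofibrantReplacement_le a).trans hab)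

noncomputable def center (a : α) : α :=
  (M.fact₂ (M.cofibrantReplacement a) ⊤ le_top).choose

theorem center_spec (a : α) :
    M.Cof (M.cofibrantReplacement a) (M.center a) ∧
      M.We (M.cofibrantReplacement a) (M.center a) ∧ M.Fib (M.center a) ⊤ :=
  (M.fact₂ (M.cofibrantReplacement a) ⊤ le_top).choose_spec

theorem cofibrantReplacement_le_center (a : α) : M.cofibrantReplacement a ≤ M.center a :=
  M.we_le _ _ (M.center_spec a).2.1

theorem cofibrant_center (a : α) : M.Cof ⊥ (M.center a) :=
  M.cof_trans (M.cofibrantReplacement_spec a).1 (M.center_spec a).1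

theorem monotone_center : Monotone M.center := fun a b hab =>
  M.lift₂ _ _ _ _ (M.center_spec a).1 (M.center_spec a).2.1 (M.center_spec b).2.2
    ((M.monotone_cofibrantReplacement hab).trans (M.cofibrantReplacement_le_center b)) le_top

theorem center_eq_of_we (hab : M.We a b) : M.center a = M.center b := by
  have hq : M.cofibrantReplacement a ≤ M.cofibrantReplacement b :=
    M.monotone_cofibrantReplacement (M.we_le _ _ hab)
  have hqa_b : M.We (M.cofibrantReplacement a) b :=
    M.two_of_three₁ _ _ _ (M.cofibrantReplacement_le a) (M.we_le _ _ hab)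
      (M.cofibrantReplacement_spec a).2.2 hab
  have hqa_qb : M.We (M.cofibrantReplacement a) (M.cofibrantReplacement b) :=
    (M.we_s2of3 _ _ _ hq (M.cofibrantReplacement_le b) hqa_b).1
  have hqa_χb : M.We (M.cofibrantReplacement a) (M.center b) :=
    M.two_of_three₁ _ _ _ hq (M.cofibrantReplacement_le_center b) hqa_qb (M.center_spec b).2.1
  exact M.eq_of_we_of_we (M.center_spec a).2.1 hqa_χb (M.cofibrant_center a)
    (M.center_spec a).2.2 (M.cofibrant_center b) (M.center_spec b).2.2

theorem isCenters_center : IsCenters M.We M.center := by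
  refine ⟨M.monotone_center, fun _ _ => M.center_eq_of_we, fun a => ?_⟩
  obtain ⟨-, -, hqa⟩ := M.cofibrantReplacement_spec a
  obtain ⟨hcof, hqχ, -⟩ := M.center_spec a
  have hq_inf : M.cofibrantReplacement a ≤ a ⊓ M.center a :=
    le_inf (M.cofibrantReplacement_le a) (M.cofibrantReplacement_le_center a)
  have hsup : M.We a (a ⊔ M.center a) := (M.cof_we_sup hcof hqχ (M.cofibrantReplacement_le a)).2
  have hq_sup : M.We (M.cofibrantReplacement a) (a ⊔ M.center a) :=
    M.two_of_three₁ _ _ _ (M.cofibrantReplacement_le a) le_sup_left hqa hsup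
  exact ⟨(M.we_s2of3 _ _ _ hq_inf inf_le_right hqχ).2, (M.we_s2of3 _ _ _ hq_inf inf_le_left hqa).2,
    hsup, (M.we_s2of3 _ _ _ (M.cofibrantReplacement_le_center a) le_sup_right hq_sup).2⟩

end Necessity

/-- In a poset the retract argument collapses: a map that lifts against the right half of its
own factorization equals the left half. So lifting and factorization imply maximality. -/
def ofLiftingFactorization (We Cof Fib : α → α → Prop)
    (we_le : ∀ a b : α, We a b → a ≤ b) (cof_le : ∀ a b : α, Cof a b → a ≤ b)
    (fib_le : ∀ a b : α, Fib a b → a ≤ b) (we_refl : ∀ a : α, We a a)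
    (two_of_three₁ : ∀ a b c : α, a ≤ b → b ≤ c → We a b → We b c → We a c)
    (two_of_three₂ : ∀ a b c : α, a ≤ b → b ≤ c → We a b → We a c → We b c)
    (two_of_three₃ : ∀ a b c : α, a ≤ b → b ≤ c → We b c → We a c → We a b)
    (lift₁ : ∀ a b x y : α, Cof a b → Fib x y → We x y → Lifts a b x y)
    (lift₂ : ∀ a b x y : α, Cof a b → We a b → Fib x y → Lifts a b x y)
    (fact₁ : ∀ a b : α, a ≤ b → ∃ m : α, Cof a m ∧ Fib m b ∧ We m b)
    (fact₂ : ∀ a b : α, a ≤ b → ∃ m : α, Cof a m ∧ We a m ∧ Fib m b) : ModelStr α where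
  We := We
  Cof := Cof
  Fib := Fib
  we_le := we_le
  cof_le := cof_le
  fib_le := fib_le
  we_refl := we_refl
  two_of_three₁ := two_of_three₁
  two_of_three₂ := two_of_three₂
  two_of_three₃ := two_of_three₃
  lift₁ := lift₁
  lift₂ := lift₂
  max₁L a b hab H := by
    obtain ⟨m, hcof, hfib, hwe⟩ := fact₁ a b hab
    obtain rfl : m = b := le_antisymm (fib_le _ _ hfib) (H m b hfib hwe (cof_le _ _ hcof) le_rfl)
    exact hcof
  max₁R x y hxy H := by
    obtain ⟨m, hcof, hfib, hwe⟩ := fact₁ x y hxy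
    obtain rfl : m = x := le_antisymm (H x m hcof le_rfl (fib_le _ _ hfib)) (cof_le _ _ hcof)
    exact ⟨hfib, hwe⟩
  max₂L a b hab H := by
    obtain ⟨m, hcof, hwe, hfib⟩ := fact₂ a b hab
    obtain rfl : m = b := le_antisymm (fib_le _ _ hfib) (H m b hfib (cof_le _ _ hcof) le_rfl)
    exact ⟨hcof, hwe⟩
  max₂R x y hxy H := by
    obtain ⟨m, hcof, hwe, hfib⟩ := fact₂ x y hxy
    obtain rfl : m = x := le_antisymm (H x m hcof hwe le_rfl (fib_le _ _ hfib)) (cof_le _ _ hcof)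
    exact hfib
  fact₁ := fact₁
  fact₂ := fact₂

end ModelStr

def CenterCof (χ : α → α) (a b : α) : Prop := a ≤ b ∧ b ≤ a ⊔ b ⊓ χ b

def CenterFib (χ : α → α) (x y : α) : Prop := x ≤ y ∧ y ⊓ χ x ≤ x

section Sufficiency

variable {W : α → α → Prop} {χ : α → α} {a b c x y : α}

theorem CenterCof.le_of_centerFib (hc : CenterCof χ a b) (hf : CenterFib χ x y) (hax : a ≤ x)
    (hby : b ≤ y) (hχ : χ b ≤ χ x) : b ≤ x :=
  hc.2.trans (sup_le hax ((inf_le_inf hby hχ).trans hf.2))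

theorem centerCof_centerFib_sup_inf (hab : a ≤ b) (hm : χ (a ⊔ b ⊓ c) = c) :
    CenterCof χ a (a ⊔ b ⊓ c) ∧ CenterFib χ (a ⊔ b ⊓ c) b := by
  refine ⟨⟨le_sup_left, ?_⟩, ⟨sup_le hab inf_le_left, ?_⟩⟩ <;> rw [hm]
  · exact sup_le le_sup_left ((le_inf le_sup_right inf_le_right).trans le_sup_right)
  · exact le_sup_right

theorem S2OF3.refl_of_isCenters (hS : S2OF3 W) (hχ : IsCenters W χ) (a : α) : W a a :=
  (hS a a _ le_rfl le_sup_left (hχ.2.2 a).2.2.1).1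

theorem S2OF3.exists_centerCof_centerFib_we (hS : S2OF3 W) (hχ : IsCenters W χ)
    (hab : a ≤ b) : ∃ m, CenterCof χ a m ∧ CenterFib χ m b ∧ W m b := by
  have hwe : W (a ⊔ b ⊓ χ b) b :=
    (hS _ _ b le_sup_right (sup_le hab inf_le_left) (hχ.2.2 b).2.1).2
  obtain ⟨hcof, hfib⟩ := centerCof_centerFib_sup_inf hab (hχ.2.1 _ _ hwe)
  exact ⟨_, hcof, hfib, hwe⟩

theorem S2OF3.exists_centerCof_we_centerFib (hS : S2OF3 W) (hχ : IsCenters W χ)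
    (hab : a ≤ b) : ∃ m, CenterCof χ a m ∧ W a m ∧ CenterFib χ m b := by
  have hwe : W a (a ⊔ b ⊓ χ a) :=
    (hS a _ _ le_sup_left (sup_le le_sup_left (inf_le_right.trans le_sup_right))
      (hχ.2.2 a).2.2.1).1
  obtain ⟨hcof, hfib⟩ := centerCof_centerFib_sup_inf hab (hχ.2.1 _ _ hwe).symm
  exact ⟨_, hcof, hwe, hfib⟩

def centerModelStr (hWle : ∀ a b : α, W a b → a ≤ b)
    (hWtrans : ∀ a b c : α, W a b → W b c → W a c) (hS : S2OF3 W) (hχ : IsCenters W χ) :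
    ModelStr α :=
  ModelStr.ofLiftingFactorization W (CenterCof χ) (CenterFib χ) hWle (fun _ _ h => h.1)
    (fun _ _ h => h.1) (hS.refl_of_isCenters hχ) (fun a b c _ _ => hWtrans a b c)
    (fun a b c hab hbc _ hac => (hS a b c hab hbc hac).2)
    (fun a b c hab hbc _ hac => (hS a b c hab hbc hac).1)
    (fun _ _ x y hc hf hw hax hby =>
      hc.le_of_centerFib hf hax hby ((hχ.1 hby).trans (hχ.2.1 x y hw).ge))
    (fun a b _ _ hc hw hf hax hby =>
      hc.le_of_centerFib hf hax hby ((hχ.2.1 a b hw).ge.trans (hχ.1 hax)))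
    (fun _ _ => hS.exists_centerCof_centerFib_we hχ)
    (fun _ _ => hS.exists_centerCof_we_centerFib hχ)

end Sufficiency

theorem model_structure_exists_iff_general (W : α → α → Prop)
    (hWle : ∀ a b : α, W a b → a ≤ b)
    (hWtrans : ∀ a b c : α, W a b → W b c → W a c) :
    (∃ M : ModelStr α, M.We = W) ↔ (S2OF3 W ∧ ∃ χ : α → α, IsCenters W χ) := by
  constructor
  · rintro ⟨M, rfl⟩
    exact ⟨M.we_s2of3, M.center, M.isCenters_center⟩
  · rintro ⟨hS, χ, hχ⟩
    exact ⟨centerModelStr hWle hWtrans hS hχ, rfl⟩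

/-- (Main theorem.)  For a subcategory `W` of a bicomplete skeletal
poset, a model structure with weak equivalences `W` exists iff `W` satisfies strong
2-of-3 and there exists a choice of centers. -/
theorem model_structure_exists_iff (W : α → α → Prop)
    (hWle : ∀ a b : α, W a b → a ≤ b)
    (hWrefl : ∀ a : α, W a a)
    (hWtrans : ∀ a b c : α, W a b → W b c → W a c) :
    (∃ M : ModelStr α, M.We = W) ↔ (S2OF3 W ∧ ∃ χ : α → α, IsCenters W χ) :=
  model_structure_exists_iff_general W hWle hWtrans
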